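/- arXiv:2605.31130 — 2 statements merged into one kernel-verified Lean document; each statement's English description precedes it below -/
import Mathlib

section
/- Let V ~ Gamma(1,1) and let A02 be a nonnegative nondecreasing function with A02(0) = 0. Then E[V e^{−V A02(t)}] / E[e^{−V A02(t)}] = 1/(1 + A02(t)). Consequently, if the 0→1 hazard is set to zero while the 0→2 hazard is V·α02(t), the observed 0→2 hazard is α02(t)/(1 + A02(t)), which differs from α02(t)/(1 + A02(t) + A01(t)) whenever A01(t) > 0. -/
open MeasureTheory Real

lemma gamma_int (a : ℝ) (ha : 0 ≤ a) :
    (∫ x in Set.Ioi (0 : ℝ), Real.exp (-x * a) * Real.exp (-x)) = 1 / (1 + a) := by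
  have hr : (0 : ℝ) < 1 + a := by linarith
  have := Real.integral_rpow_mul_exp_neg_mul_Ioi (a := 1) (r := 1 + a) one_pos hr
  rw [show (1:ℝ) - 1 = 0 by ring] at this
  simp only [Real.rpow_zero, one_mul, Real.rpow_one] at this
  rw [Real.Gamma_one, mul_one] at this
  rw [← this]
  refine setIntegral_congr_fun measurableSet_Ioi (fun x hx => ?_)
  rw [← Real.exp_add]
  ring_nf

lemma gamma_int2 (a : ℝ) (ha : 0 ≤ a) :
    (∫ x in Set.Ioi (0 : ℝ), (x * Real.exp (-x * a)) * Real.exp (-x)) = (1 / (1 + a)) ^ 2 := by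
  have hr : (0 : ℝ) < 1 + a := by linarith
  have := Real.integral_rpow_mul_exp_neg_mul_Ioi (a := 2) (r := 1 + a) two_pos hr
  rw [show (2:ℝ) - 1 = 1 by ring] at this
  simp only [Real.rpow_one] at this
  rw [Real.Gamma_two, mul_one] at this
  rw [show ((1:ℝ)/(1+a)) ^ (2:ℝ) = (1/(1+a))^2 by
    rw [show (2:ℝ)=((2:ℕ):ℝ) by norm_num, Real.rpow_natCast]] at this
  rw [← this]
  refine setIntegral_congr_fun measurableSet_Ioi (fun x hx => ?_)
  rw [mul_assoc, ← Real.exp_add]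
  ring_nf

/-- With `V ~ Gamma(1,1)` (standard exponential) and `A02`
nonnegative nondecreasing with `A02 0 = 0`, one has
`E[V e^{-V A02(t)}]/E[e^{-V A02(t)}] = 1/(1+A02(t))`.  Consequently, under the
DGP-level intervention "never treat" the observed 0→2 hazard is
`α02(t)/(1+A02(t))`, which differs from `α02(t)/(1+A02(t)+A01(t))` whenever
`A01(t) > 0` (and the hazard `α02(t)` is positive). -/
theorem stmt1
    {Ω : Type*} [MeasurableSpace Ω] (P : Measure Ω) [IsProbabilityMeasure P]
    (V : Ω → ℝ)
    (hV : ∀ f : ℝ → ℝ, Measurable f →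
      ∫ ω, f (V ω) ∂P = ∫ x in Set.Ioi (0 : ℝ), f x * Real.exp (-x))
    (A02 A01 : ℝ → ℝ) (α02 : ℝ → ℝ)
    (hA02mono : Monotone A02) (hA020 : A02 0 = 0)
    (t : ℝ) (ht : 0 ≤ t) :
    (∫ ω, V ω * Real.exp (-(V ω) * A02 t) ∂P) /
        (∫ ω, Real.exp (-(V ω) * A02 t) ∂P)
      = 1 / (1 + A02 t) ∧
    (0 < α02 t → 0 < A01 t →
      α02 t / (1 + A02 t) ≠ α02 t / (1 + A02 t + A01 t)) := by
  set a := A02 t with hadef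
  have ha : 0 ≤ a := hA020 ▸ hA02mono ht
  have hr : (0 : ℝ) < 1 + a := by linarith
  constructor
  · have hden : (∫ ω, Real.exp (-(V ω) * a) ∂P) = 1 / (1 + a) := by
      rw [hV (fun x => Real.exp (-x * a)) (by fun_prop)]
      exact gamma_int a ha
    have hnum : (∫ ω, V ω * Real.exp (-(V ω) * a) ∂P) = (1 / (1 + a)) ^ 2 := by
      rw [hV (fun x => x * Real.exp (-x * a)) (by fun_prop)]
      exact gamma_int2 a ha
    rw [hden, hnum]
    field_simp
  · intro hα hA01
    have h1 : α02 t / (1 + a + A01 t) < α02 t / (1 + a) :=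
      div_lt_div_of_pos_left hα hr (by linarith)
    exact ne_of_gt h1
end

section
/- Under the smoothed intervention with hazards: 0→1 hazard α̃01 (supported on (u*−b, u*+b) with density g̃), 0→2 hazard α02, 1→2 hazard α12(·|u), the interventional risk for t < u*−b equals ψₜ⁻ = ∫₀ᵗ exp(−A02(s)) dA02(s) = 1 − exp(−A02(t)); and for t ≥ u*−b it equals ψₜ⁺ = ψ⁻_{u*−b} + μₜ + ηₜ, where μₜ = (1/c*) ∫ 1{u*−b < u < t∧(u*+b)} H01*(u) exp(−A02(u)) dA02(u) with H01*(u) = ∫ᵤ^{u*+b} g(v) dv, and ηₜ = (1/c*) ∫ 1{u*−b < u < t∧(u*+b)} (1 − S1(t|u)) S0(u) α01(u) du with S0(u) = exp(−A01(u) − A02(u)) and S1(t|u) = exp(−∫ᵤᵗ α12(v|u) dv). That is, substituting α̃01 for α01 in the general illness-death risk formula yields this decomposition. -/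
/-!
Under the intervention the 0→1 survival function is `1` before the window `(u₋*, u₊*)`,
`H01*/c*` inside it and `0` after it, while the 0→1 density `g̃ = g / c*` lives on the window.
Splitting both integrals of the illness-death risk formula at `u₋*` and `t ∧ u₊*` therefore
leaves the pre-window mass `∫₀^{u₋*} e^{-A02} dA02 = 1 - e^{-A02(u₋*)}`, the term `μₜ`, and,
since `g e^{-A02} = S0 α01`, the term `ηₜ`.
-/

open MeasureTheory Real intervalIntegral Set

section PiecewiseIntegrals

variable {f g : ℝ → ℝ} {a b : ℝ}

lemma ae_restrict_Ioc_of_eqOn_Ioo (h : EqOn f g (Ioo a b)) :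
    f =ᵐ[volume.restrict (Ioc a b)] g :=
  (ae_restrict_congr_set Ioo_ae_eq_Ioc).1 (ae_restrict_of_forall_mem measurableSet_Ioo h)

lemma integral_congr_Ioo (hab : a ≤ b) (h : EqOn f g (Ioo a b)) :
    ∫ x in a..b, f x = ∫ x in a..b, g x := by
  rw [integral_of_le hab, integral_of_le hab, integral_congr_ae (ae_restrict_Ioc_of_eqOn_Ioo h)]

lemma IntervalIntegrable.congr_Ioo (hg : IntervalIntegrable g volume a b) (hab : a ≤ b)
    (h : EqOn f g (Ioo a b)) : IntervalIntegrable f volume a b := by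
  rw [intervalIntegrable_iff_integrableOn_Ioc_of_le hab] at hg ⊢
  exact hg.congr (ae_restrict_Ioc_of_eqOn_Ioo h).symm

lemma integral_eq_add_add_of_eqOn_Ioo {f₁ f₂ f₃ : ℝ → ℝ} {c d : ℝ}
    (hab : a ≤ b) (hbc : b ≤ c) (hcd : c ≤ d)
    (h₁ : IntervalIntegrable f₁ volume a b) (h₂ : IntervalIntegrable f₂ volume b c)
    (h₃ : IntervalIntegrable f₃ volume c d)
    (e₁ : EqOn f f₁ (Ioo a b)) (e₂ : EqOn f f₂ (Ioo b c)) (e₃ : EqOn f f₃ (Ioo c d)) :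
    ∫ x in a..d, f x = (∫ x in a..b, f₁ x) + (∫ x in b..c, f₂ x) + ∫ x in c..d, f₃ x := by
  have i₁ := h₁.congr_Ioo hab e₁
  have i₂ := h₂.congr_Ioo hbc e₂
  have i₃ := h₃.congr_Ioo hcd e₃
  rw [← integral_add_adjacent_intervals i₁ (i₂.trans i₃), ← integral_add_adjacent_intervals i₂ i₃,
    integral_congr_Ioo hab e₁, integral_congr_Ioo hbc e₂, integral_congr_Ioo hcd e₃, add_assoc]

end PiecewiseIntegrals

section Calculus

variable {α A : ℝ → ℝ}

lemma hasDerivAt_of_eq_primitive (hα : Continuous α)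
    (hA : ∀ u, A u = ∫ s in (0:ℝ)..u, α s) (u : ℝ) : HasDerivAt A (α u) u := by
  rw [funext hA]
  exact (hα.integral_hasStrictDerivAt 0 u).hasDerivAt

lemma integral_exp_neg_mul_eq_sub (hα : Continuous α) (hA : ∀ u, HasDerivAt A (α u) u)
    (a b : ℝ) : ∫ u in a..b, exp (-A u) * α u = exp (-A a) - exp (-A b) := by
  have hcA : Continuous A := continuous_iff_continuousAt.2 fun u => (hA u).continuousAt
  have hcont : Continuous fun u => exp (-A u) * α u := by fun_prop
  have hderiv (u : ℝ) : HasDerivAt (fun x => -exp (-A x)) (-(exp (-A u) * -α u)) u :=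
    (hA u).neg.exp.neg
  rw [integral_eq_sub_of_hasDerivAt (fun u _ => by simpa using hderiv u)
    (hcont.intervalIntegrable a b)]
  ring

lemma continuous_parametric_integral_from {f : ℝ → ℝ → ℝ}
    (hf : Continuous fun p : ℝ × ℝ => f p.1 p.2) (t : ℝ) :
    Continuous fun u => ∫ v in u..t, f v u := by
  have h := continuous_parametric_intervalIntegral_of_continuous (μ := volume) (a₀ := t)
    (f := fun u v => f v u) (hf.comp continuous_swap) continuous_id
  exact h.neg.congr fun u => (integral_symm t u).symm

end Calculus

section SmoothedIntervention

variable {um up t c : ℝ}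

lemma integral_survival_mul_of_le {H h : ℝ → ℝ} (ht₀ : 0 ≤ t) (ht : t ≤ um) :
    ∫ u in 0..t, (if u ≤ um then 1 else if u < up then H u / c else 0) * h u =
      ∫ u in 0..t, h u :=
  integral_congr fun u hu => by
    rw [uIcc_of_le ht₀] at hu
    simp [hu.2.trans ht]

lemma integral_window_mul_of_le {G k : ℝ → ℝ} (ht₀ : 0 ≤ t) (ht : t ≤ um) :
    ∫ u in 0..t, (if um < u ∧ u < up then G u / c else 0) * k u = 0 := by
  refine (integral_congr (g := fun _ => (0:ℝ)) fun u hu => ?_).trans integral_zero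
  rw [uIcc_of_le ht₀] at hu
  simp [(hu.2.trans ht).not_gt]

lemma integral_survival_mul (hum : 0 ≤ um) (hup : um ≤ up) (ht : um ≤ t) {H h : ℝ → ℝ}
    (hh : IntervalIntegrable h volume 0 um)
    (hHh : IntervalIntegrable (fun u => H u * h u) volume um (min t up)) :
    ∫ u in 0..t, (if u ≤ um then 1 else if u < up then H u / c else 0) * h u =
      (∫ u in 0..um, h u) + 1 / c * ∫ u in um..min t up, H u * h u := by
  rw [integral_eq_add_add_of_eqOn_Ioo (f₃ := fun _ => 0) hum (le_min ht hup) (min_le_left t up)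
    hh (hHh.const_mul (1 / c)) intervalIntegrable_const, intervalIntegral.integral_const_mul,
    intervalIntegral.integral_zero, add_zero]
  · intro u hu
    simp [hu.2.le]
  · intro u hu
    dsimp only
    rw [if_neg (not_le.2 hu.1), if_pos (lt_min_iff.1 hu.2).2]
    ring
  · intro u hu
    have hupu : up < u := (min_lt_iff.1 hu.1).resolve_left (lt_asymm hu.2)
    simp [(hup.trans_lt hupu).not_ge, hupu.not_gt]

lemma integral_window_mul (hum : 0 ≤ um) (hup : um ≤ up) (ht : um ≤ t) {G k : ℝ → ℝ}
    (hGk : IntervalIntegrable (fun u => G u * k u) volume um (min t up)) :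
    ∫ u in 0..t, (if um < u ∧ u < up then G u / c else 0) * k u =
      1 / c * ∫ u in um..min t up, G u * k u := by
  rw [integral_eq_add_add_of_eqOn_Ioo (f₁ := fun _ => 0) (f₃ := fun _ => 0) hum (le_min ht hup)
    (min_le_left t up) intervalIntegrable_const (hGk.const_mul (1 / c)) intervalIntegrable_const,
    intervalIntegral.integral_const_mul]
  simp only [intervalIntegral.integral_zero, zero_add, add_zero]
  · intro u hu
    simp [hu.2.not_gt]
  · intro u hu
    dsimp only
    rw [if_pos ⟨hu.1, (lt_min_iff.1 hu.2).2⟩]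
    ring
  · intro u hu
    have hupu : up < u := (min_lt_iff.1 hu.1).resolve_left (lt_asymm hu.2)
    simp [hupu.not_gt]

end SmoothedIntervention

theorem stmt7_general
    (τ um up : ℝ) (h0um : 0 ≤ um) (humup : um < up)
    (α01 α02 : ℝ → ℝ) (α12 : ℝ → ℝ → ℝ)  -- `α12 v u` stands for `α12(v|u)`
    (hc01 : Continuous α01) (hc02 : Continuous α02)
    (hc12 : Continuous fun p : ℝ × ℝ => α12 p.1 p.2)
    (A01 A02 : ℝ → ℝ)
    (hA01 : ∀ u, A01 u = ∫ s in (0:ℝ)..u, α01 s)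
    (hA02 : ∀ u, A02 u = ∫ s in (0:ℝ)..u, α02 s)
    (g : ℝ → ℝ) (hg : ∀ u, g u = α01 u * Real.exp (-A01 u))
    (c : ℝ)
    (H01 : ℝ → ℝ) (hH01 : ∀ u, H01 u = ∫ v in u..up, g v)
    (S01t : ℝ → ℝ)
    (hS01t : ∀ u, S01t u = if u ≤ um then 1 else if u < up then H01 u / c else 0)
    (gt : ℝ → ℝ)
    (hgt : ∀ u, gt u = if um < u ∧ u < up then g u / c else 0)
    (S0 : ℝ → ℝ) (hS0 : ∀ u, S0 u = Real.exp (-(A01 u + A02 u)))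
    (S1 : ℝ → ℝ → ℝ)
    (hS1 : ∀ t u, S1 t u = Real.exp (-(∫ v in u..t, α12 v u)))
    (μ η : ℝ → ℝ)
    (hμ : ∀ t, μ t = (1 / c) *
      ∫ u in um..(min t up), H01 u * Real.exp (-A02 u) * α02 u)
    (hη : ∀ t, η t = (1 / c) *
      ∫ u in um..(min t up), (1 - S1 t u) * S0 u * α01 u)
    (ψ : ℝ → ℝ)
    (hψ : ∀ t, ψ t = (∫ u in (0:ℝ)..t, S01t u * Real.exp (-A02 u) * α02 u)
      + ∫ u in (0:ℝ)..t, gt u * Real.exp (-A02 u) * (1 - S1 t u)) :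
    (∀ t ∈ Set.Icc (0:ℝ) τ, t < um → ψ t = 1 - Real.exp (-A02 t)) ∧
    (∀ t ∈ Set.Icc (0:ℝ) τ, um ≤ t →
      ψ t = (1 - Real.exp (-A02 um)) + μ t + η t) := by
  have hdA02 := hasDerivAt_of_eq_primitive hc02 hA02
  have hcA01 : Continuous A01 := continuous_iff_continuousAt.2 fun u =>
    (hasDerivAt_of_eq_primitive hc01 hA01 u).continuousAt
  have hcA02 : Continuous A02 := continuous_iff_continuousAt.2 fun u => (hdA02 u).continuousAt
  have hcg : Continuous g := by rw [funext hg]; exact hc01.mul hcA01.neg.rexp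
  have hcH01 : Continuous H01 := by
    rw [funext hH01]; exact continuous_parametric_integral_from (hcg.comp continuous_fst) up
  have hcS1 (t : ℝ) : Continuous (S1 t) := by
    rw [funext (hS1 t)]; exact (continuous_parametric_integral_from hc12 t).neg.rexp
  have he02 : Continuous fun u => exp (-A02 u) * α02 u := by fun_prop
  have hA02_zero : A02 0 = 0 := by simp [hA02]
  refine ⟨fun t ⟨ht₀, _⟩ htum => ?_, fun t _ htum => ?_⟩
  · rw [hψ]
    simp only [hS01t, hgt, mul_assoc]
    rw [integral_survival_mul_of_le ht₀ htum.le, integral_window_mul_of_le ht₀ htum.le,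
      integral_exp_neg_mul_eq_sub hc02 hdA02, hA02_zero]
    simp
  · have hgS0 : ∀ u, g u * (exp (-A02 u) * (1 - S1 t u)) = (1 - S1 t u) * (S0 u * α01 u) :=
      fun u => by rw [hg, hS0, neg_add, exp_add]; ring
    rw [hψ, hμ, hη]
    simp only [hS01t, hgt, mul_assoc]
    have hcμ : Continuous fun u => H01 u * (exp (-A02 u) * α02 u) := by fun_prop
    have hcη : Continuous fun u => g u * (exp (-A02 u) * (1 - S1 t u)) := by fun_prop
    rw [integral_survival_mul h0um humup.le htum (he02.intervalIntegrable _ _)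
        (hcμ.intervalIntegrable _ _),
      integral_window_mul h0um humup.le htum (hcη.intervalIntegrable _ _),
      integral_exp_neg_mul_eq_sub hc02 hdA02, hA02_zero]
    simp [hgS0]

/-- Under the smoothed intervention (0→1 transition-time density
`g̃` on the window `(u₋*, u₊*)`, so the intervened "no-transition-yet"
probability is `S̃01(u) = 1` before the window, `H01*(u)/c*` in the window, `0`
after; 0→2 hazard `α02`; 1→2 hazard `α12(·|u)`), the interventional risk
`ψₜ = ∫₀ᵗ S̃01(u) e^{-A02(u)} α02(u) du + ∫₀ᵗ g̃(u) e^{-A02(u)} (1-S1(t|u)) du`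
satisfies `ψₜ = ψₜ⁻ = 1 - e^{-A02(t)}` for `t < u₋*` and
`ψₜ = ψ⁻_{u₋*} + μₜ + ηₜ` for `t ≥ u₋*`, with
`μₜ = (1/c*) ∫ 1{u₋*<u<t∧u₊*} H01*(u) e^{-A02(u)} dA02(u)` and
`ηₜ = (1/c*) ∫ 1{u₋*<u<t∧u₊*} (1-S1(t|u)) S0(u) α01(u) du`. -/
theorem stmt7
    (τ um up : ℝ) (h0um : 0 ≤ um) (humup : um < up) (hupτ : up ≤ τ)
    (α01 α02 : ℝ → ℝ) (α12 : ℝ → ℝ → ℝ)  -- `α12 v u` stands for `α12(v|u)`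
    (hc01 : Continuous α01) (hc02 : Continuous α02)
    (hc12 : Continuous fun p : ℝ × ℝ => α12 p.1 p.2)
    (hn01 : ∀ s, 0 ≤ α01 s) (hn02 : ∀ s, 0 ≤ α02 s) (hn12 : ∀ v u, 0 ≤ α12 v u)
    (hpos : ∀ u ∈ Set.Icc um up, 0 < α01 u)
    (A01 A02 : ℝ → ℝ)
    (hA01 : ∀ u, A01 u = ∫ s in (0:ℝ)..u, α01 s)
    (hA02 : ∀ u, A02 u = ∫ s in (0:ℝ)..u, α02 s)
    (g : ℝ → ℝ) (hg : ∀ u, g u = α01 u * Real.exp (-A01 u))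
    (c : ℝ) (hc : c = ∫ u in um..up, g u)
    (H01 : ℝ → ℝ) (hH01 : ∀ u, H01 u = ∫ v in u..up, g v)
    (S01t : ℝ → ℝ)
    (hS01t : ∀ u, S01t u = if u ≤ um then 1 else if u < up then H01 u / c else 0)
    (gt : ℝ → ℝ)
    (hgt : ∀ u, gt u = if um < u ∧ u < up then g u / c else 0)
    (S0 : ℝ → ℝ) (hS0 : ∀ u, S0 u = Real.exp (-(A01 u + A02 u)))
    (S1 : ℝ → ℝ → ℝ)
    (hS1 : ∀ t u, S1 t u = Real.exp (-(∫ v in u..t, α12 v u)))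
    (μ η : ℝ → ℝ)
    (hμ : ∀ t, μ t = (1 / c) *
      ∫ u in um..(min t up), H01 u * Real.exp (-A02 u) * α02 u)
    (hη : ∀ t, η t = (1 / c) *
      ∫ u in um..(min t up), (1 - S1 t u) * S0 u * α01 u)
    (ψ : ℝ → ℝ)
    (hψ : ∀ t, ψ t = (∫ u in (0:ℝ)..t, S01t u * Real.exp (-A02 u) * α02 u)
      + ∫ u in (0:ℝ)..t, gt u * Real.exp (-A02 u) * (1 - S1 t u)) :
    (∀ t ∈ Set.Icc (0:ℝ) τ, t < um → ψ t = 1 - Real.exp (-A02 t)) ∧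
    (∀ t ∈ Set.Icc (0:ℝ) τ, um ≤ t →
      ψ t = (1 - Real.exp (-A02 um)) + μ t + η t) :=
  stmt7_general τ um up h0um humup α01 α02 α12 hc01 hc02 hc12 A01 A02 hA01 hA02 g hg c H01 hH01 S01t
    hS01t gt hgt S0 hS0 S1 hS1 μ η hμ hη ψ hψ
end
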